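/- For every finite simple graph G, the equimatchability defect η(G) equals the minimum size of a set S ⊆ V(G) such that S intersects Exp(M) for every second best matching M of G, where Exp(M) is the set of vertices exposed by M. -/

import Mathlib

open SimpleGraph

variable {V : Type*}

/-- `M` is a matching in `G`: a set of pairwise vertex-disjoint edges of `G`. -/
def IsMatchingIn (G : SimpleGraph V) (M : Finset (Sym2 V)) : Prop :=
  (∀ e ∈ M, e ∈ G.edgeSet) ∧
    ∀ e ∈ M, ∀ f ∈ M, e ≠ f → ∀ v : V, v ∈ e → v ∉ f

/-- `M` is a maximal matching in `G`: a matching not properly contained in another matching. -/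
def IsMaximalMatchingIn (G : SimpleGraph V) (M : Finset (Sym2 V)) : Prop :=
  IsMatchingIn G M ∧ ∀ M', IsMatchingIn G M' → M ⊆ M' → M' = M

/-- `M` saturates (covers) the vertex `v`. -/
def Sat (M : Finset (Sym2 V)) (v : V) : Prop := ∃ e ∈ M, v ∈ e

/-- The matching number `ν(G)`. -/
noncomputable def nuNum (G : SimpleGraph V) : ℕ :=
  sSup {n | ∃ M, IsMatchingIn G M ∧ M.card = n}

/-- The minimum maximal matching number `β(G)`. -/
noncomputable def betaNum (G : SimpleGraph V) : ℕ :=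
  sInf {n | ∃ M, IsMaximalMatchingIn G M ∧ M.card = n}

/-- The matching gap `μ(G) = ν(G) - β(G)`. -/
noncomputable def muGap (G : SimpleGraph V) : ℕ := nuNum G - betaNum G

/-- `M` covers the vertex set `S`. -/
def CoversSet (M : Finset (Sym2 V)) (S : Set V) : Prop := ∀ v ∈ S, Sat M v

/-- `S` is an equimatchable set in `G`: all maximal matchings of `G` covering `S`
have the same size. -/
def EquiSet (G : SimpleGraph V) (S : Set V) : Prop :=
  ∀ M M' : Finset (Sym2 V), IsMaximalMatchingIn G M → IsMaximalMatchingIn G M' →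
    CoversSet M S → CoversSet M' S → M.card = M'.card

/-- The equimatchability defect `η(G)`: the minimum size of an equimatchable set in `G`. -/
noncomputable def etaDefect (G : SimpleGraph V) : ℕ :=
  sInf {n | ∃ S : Set V, EquiSet G S ∧ S.ncard = n}

/-- A second best matching: a maximal matching of size `ν(G) - 1`. -/
def IsSecondBest (G : SimpleGraph V) (M : Finset (Sym2 V)) : Prop :=
  IsMaximalMatchingIn G M ∧ M.card + 1 = nuNum G

/-- `Exp(M)`: the set of vertices exposed (not saturated) by `M`. -/
def ExpSet (M : Finset (Sym2 V)) : Set V := {v | ¬ Sat M v}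

/-
A maximal matching `M` with `|M| < ν(G)` can always be replaced by a maximal matching of size
`|M| + 1` that still saturates every vertex saturated by `M`. Among the matchings `N` of size
`|M| + 1` take one sharing as many edges with `M` as possible; if some `M`-saturated vertex were
exposed by `N`, exchanging an edge of `N \ M` for its `M`-edge would increase the overlap. Such an
`N` is maximal because any edge that could be added to `N` could already be added to `M`.
Iterating, every maximal matching covering `S` extends (on saturated vertices) to a second best
matching or is maximum, so `S` is equimatchable exactly when it meets `Exp(M)` for every second
best `M`.
-/

section Matching

variable {G : SimpleGraph V} {M N : Finset (Sym2 V)} {e : Sym2 V} {v : V}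

lemma Sat.mono (h : M ⊆ N) (hv : Sat M v) : Sat N v :=
  let ⟨f, hf, hvf⟩ := hv
  ⟨f, h hf, hvf⟩

lemma IsMatchingIn.mono (hN : IsMatchingIn G N) (h : M ⊆ N) : IsMatchingIn G M :=
  ⟨fun f hf => hN.1 f (h hf), fun f hf f' hf' => hN.2 f (h hf) f' (h hf')⟩

lemma IsMatchingIn.insert_edge [DecidableEq V] (hM : IsMatchingIn G M) (he : e ∈ G.edgeSet)
    (hfree : ∀ v ∈ e, ¬ Sat M v) : IsMatchingIn G (insert e M) := by
  refine ⟨fun f hf => ?_, fun f hf f' hf' hne v hv => ?_⟩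
  · rcases Finset.mem_insert.mp hf with rfl | hf
    exacts [he, hM.1 f hf]
  · rw [Finset.mem_insert] at hf hf'
    rcases hf with rfl | hf <;> rcases hf' with rfl | hf'
    · exact absurd rfl hne
    · exact fun hvf' => hfree v hv ⟨f', hf', hvf'⟩
    · exact fun hve => hfree v hve ⟨f, hf, hv⟩
    · exact hM.2 f hf f' hf' hne v hv

lemma IsMatchingIn.eq_of_mem_of_mem (hM : IsMatchingIn G M) {f f' : Sym2 V} (hf : f ∈ M)
    (hf' : f' ∈ M) (hvf : v ∈ f) (hvf' : v ∈ f') : f = f' := by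
  by_contra hne
  exact hM.2 f hf f' hf' hne v hvf hvf'

lemma IsMatchingIn.exists_exchange [DecidableEq V] (hM : IsMatchingIn G M)
    (hN : IsMatchingIn G N) (hcard : M.card < N.card) {f : Sym2 V} (hf : f ∈ M) {u : V}
    (hu : u ∈ f) (hNu : ¬ Sat N u) :
    ∃ g ∈ N, g ∉ M ∧ IsMatchingIn G (insert f (N.erase g)) := by
  obtain ⟨w, rfl⟩ := Sym2.mem_iff_exists.mp hu
  have hw : w ∈ s(u, w) := Sym2.mem_mk_right u w
  suffices ∃ g ∈ N, g ∉ M ∧ ¬ Sat (N.erase g) w by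
    obtain ⟨g, hgN, hgM, hNw⟩ := this
    refine ⟨g, hgN, hgM, (hN.mono (N.erase_subset g)).insert_edge (hM.1 _ hf) ?_⟩
    intro v hv
    rcases Sym2.mem_iff.mp hv with rfl | rfl
    exacts [fun h => hNu (h.mono (N.erase_subset g)), hNw]
  by_cases hNw : Sat N w
  · obtain ⟨g, hgN, hwg⟩ := hNw
    have hgM : g ∉ M := fun hgM =>
      hNu ⟨g, hgN, hM.eq_of_mem_of_mem hf hgM hw hwg ▸ hu⟩
    refine ⟨g, hgN, hgM, fun ⟨g', hg', hwg'⟩ => (Finset.mem_erase.mp hg').1 ?_⟩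
    exact hN.eq_of_mem_of_mem (Finset.mem_of_mem_erase hg') hgN hwg' hwg
  · obtain ⟨g, hgN, hgM⟩ : ∃ g ∈ N, g ∉ M := by
      by_contra! hNM
      exact absurd (Finset.card_le_card hNM) (not_le.mpr hcard)
    exact ⟨g, hgN, hgM, fun h => hNw (h.mono (N.erase_subset g))⟩

end Matching

section Fintype

variable [Fintype V] {G : SimpleGraph V} {M : Finset (Sym2 V)} {S : Set V}

lemma bddAbove_matching_card :
    BddAbove {n | ∃ M, IsMatchingIn G M ∧ M.card = n} := by
  classical
  exact ⟨Fintype.card (Sym2 V), fun _ ⟨M, _, hM⟩ => hM ▸ M.card_le_univ⟩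

lemma IsMatchingIn.card_le_nuNum (hM : IsMatchingIn G M) : M.card ≤ nuNum G :=
  le_csSup bddAbove_matching_card ⟨M, hM, rfl⟩

lemma exists_isMatchingIn_card_eq_nuNum (G : SimpleGraph V) :
    ∃ X : Finset (Sym2 V), IsMatchingIn G X ∧ X.card = nuNum G :=
  Nat.sSup_mem (s := {n | ∃ M, IsMatchingIn G M ∧ M.card = n}) ⟨0, ∅, ⟨by simp, by simp⟩, rfl⟩
    bddAbove_matching_card

lemma IsMatchingIn.exists_card_succ_of_lt_nuNum (hM : IsMatchingIn G M)
    (h : M.card < nuNum G) :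
    ∃ N, IsMatchingIn G N ∧ N.card = M.card + 1 ∧ ∀ v, Sat M v → Sat N v := by
  classical
  obtain ⟨X, hX, hXcard⟩ := exists_isMatchingIn_card_eq_nuNum G
  set C := Finset.univ.filter fun N : Finset (Sym2 V) => IsMatchingIn G N ∧ N.card = M.card + 1
  have hC : C.Nonempty := by
    obtain ⟨N, hNX, hNcard⟩ := Finset.exists_subset_card_eq (s := X) (n := M.card + 1) (by omega)
    exact ⟨N, Finset.mem_filter.mpr ⟨Finset.mem_univ _, hX.mono hNX, hNcard⟩⟩
  obtain ⟨N, hNC, hNmax⟩ := C.exists_max_image (fun N => (N ∩ M).card) hC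
  obtain ⟨-, hN, hNcard⟩ := Finset.mem_filter.mp hNC
  refine ⟨N, hN, hNcard, fun u hMu => ?_⟩
  by_contra hNu
  obtain ⟨f, hfM, huf⟩ := hMu
  obtain ⟨g, hgN, hgM, hN'⟩ := IsMatchingIn.exists_exchange hM hN (by omega) hfM huf hNu
  have hfN : f ∉ N.erase g := fun hf => hNu ⟨f, Finset.mem_of_mem_erase hf, huf⟩
  have hN'card : (insert f (N.erase g)).card = M.card + 1 := by
    rw [Finset.card_insert_of_notMem hfN, Finset.card_erase_add_one hgN, hNcard]
  have hlt : N ∩ M ⊂ insert f (N.erase g) ∩ M := by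
    refine (Finset.ssubset_iff_of_subset fun e he => ?_).mpr
      ⟨f, Finset.mem_inter.mpr ⟨Finset.mem_insert_self _ _, hfM⟩,
        fun hf => hfN (Finset.mem_erase.mpr ⟨?_, (Finset.mem_inter.mp hf).1⟩)⟩
    · obtain ⟨heN, heM⟩ := Finset.mem_inter.mp he
      have heg : e ≠ g := fun h => hgM (h ▸ heM)
      exact Finset.mem_inter.mpr ⟨Finset.mem_insert_of_mem (Finset.mem_erase.mpr ⟨heg, heN⟩), heM⟩
    · rintro rfl
      exact hgM hfM
  exact absurd (hNmax _ (Finset.mem_filter.mpr ⟨Finset.mem_univ _, hN', hN'card⟩))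
    (not_le.mpr (Finset.card_lt_card hlt))

lemma IsMaximalMatchingIn.exists_card_succ_of_lt_nuNum (hM : IsMaximalMatchingIn G M)
    (h : M.card < nuNum G) :
    ∃ N, IsMaximalMatchingIn G N ∧ N.card = M.card + 1 ∧ ∀ v, Sat M v → Sat N v := by
  classical
  obtain ⟨N, hN, hNcard, hsat⟩ := hM.1.exists_card_succ_of_lt_nuNum h
  refine ⟨N, ⟨hN, fun N' hN' hNN' => ?_⟩, hNcard, hsat⟩
  by_contra hne
  obtain ⟨e, heN', heN⟩ := Finset.exists_of_ssubset (lt_of_le_of_ne hNN' (Ne.symm hne))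
  have hfree : ∀ v ∈ e, ¬ Sat M v := fun v hve hMv =>
    have ⟨f, hfN, hvf⟩ := hsat v hMv
    heN (hN'.eq_of_mem_of_mem heN' (hNN' hfN) hve hvf ▸ hfN)
  have heM : e ∈ M := hM.2 _ (hM.1.insert_edge (hN'.1 e heN') hfree) (Finset.subset_insert e M) ▸
    Finset.mem_insert_self e M
  exact hfree _ e.out_fst_mem ⟨e, heM, e.out_fst_mem⟩

lemma IsMaximalMatchingIn.exists_isSecondBest_of_lt_nuNum (hM : IsMaximalMatchingIn G M)
    (h : M.card < nuNum G) :
    ∃ N, IsSecondBest G N ∧ ∀ v, Sat M v → Sat N v := by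
  obtain ⟨k, hk⟩ : ∃ k, M.card + k + 1 = nuNum G := ⟨nuNum G - M.card - 1, by omega⟩
  induction k generalizing M with
  | zero => exact ⟨M, ⟨hM, hk⟩, fun _ hv => hv⟩
  | succ k ih =>
    obtain ⟨M', hM', hcard, hsat⟩ := hM.exists_card_succ_of_lt_nuNum h
    obtain ⟨N, hN, hNsat⟩ := ih hM' (by omega) (by omega)
    exact ⟨N, hN, fun v hv => hNsat v (hsat v hv)⟩

lemma IsMaximalMatchingIn.card_eq_nuNum_of_coversSet
    (hS : ∀ N : Finset (Sym2 V), IsSecondBest G N → (S ∩ ExpSet N).Nonempty)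
    (hM : IsMaximalMatchingIn G M) (hcov : CoversSet M S) : M.card = nuNum G := by
  refine (hM.1.card_le_nuNum).eq_of_not_lt fun hlt => ?_
  obtain ⟨N, hN, hsat⟩ := hM.exists_isSecondBest_of_lt_nuNum hlt
  obtain ⟨v, hvS, hvN⟩ := hS N hN
  exact hvN (hsat v (hcov v hvS))

lemma equiSet_iff (G : SimpleGraph V) (S : Set V) :
    EquiSet G S ↔ ∀ M : Finset (Sym2 V), IsSecondBest G M → (S ∩ ExpSet M).Nonempty := by
  refine ⟨fun hS M ⟨hM, hMcard⟩ => ?_, fun hS M M' hM hM' hcov hcov' => ?_⟩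
  · by_contra hdisj
    have hcov : CoversSet M S := fun v hvS => by_contra fun hMv => hdisj ⟨v, hvS, hMv⟩
    obtain ⟨M', hM', hcard, hsat⟩ := hM.exists_card_succ_of_lt_nuNum (by omega)
    have := hS M M' hM hM' hcov fun v hvS => hsat v (hcov v hvS)
    omega
  · rw [hM.card_eq_nuNum_of_coversSet hS hcov, hM'.card_eq_nuNum_of_coversSet hS hcov']

end Fintype

theorem stmt_13 {V : Type*} [Fintype V] (G : SimpleGraph V) :
    etaDefect G =
      sInf {n | ∃ S : Set V,
        (∀ M : Finset (Sym2 V), IsSecondBest G M → (S ∩ ExpSet M).Nonempty) ∧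
        S.ncard = n} := by
  simp only [etaDefect, equiSet_iff]
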